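/- arXiv:math/0112241 — 2 statements merged into one kernel-verified Lean document; each statement's English description precedes it below -/
import Mathlib

section
/- For every parameter φ ∈ ℂ^{p−1}, the Lie algebra F_φ is frobeniusian: letting ω_1 denote the coordinate functional on F_φ dual to the basis vector X_1 (so ω_1(X_1) = 1 and ω_1(X_j) = 0 for j ≥ 2), the alternating bilinear form B(x,y) = ω_1([x,y]) on F_φ is nondegenerate. -/
open scoped BigOperators

noncomputable section

/-- The underlying space ℂ^{2p} of the Lie algebra `F_φ`. -/
abbrev V (p : ℕ) : Type := Fin (2*p) → ℂ

/-- The space of bilinear maps ℂ^{2p} × ℂ^{2p} → ℂ^{2p}. -/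
abbrev Bil (p : ℕ) : Type := V p →ₗ[ℂ] V p →ₗ[ℂ] V p

/-- The basis vector `X j` (1-indexed, j = 1, …, 2p). -/
def X (p j : ℕ) : V p := fun i => if (i : ℕ) + 1 = j then 1 else 0

/-- The coordinate functional dual to `X j` (1-indexed). -/
def coordL (p j : ℕ) : V p →ₗ[ℂ] ℂ :=
  if h : j - 1 < 2*p then LinearMap.proj (⟨j - 1, h⟩ : Fin (2*p)) else 0

/-- The elementary alternating bilinear map `(x,y) ↦ (x_a y_b − x_b y_a) • v`
(indices 1-based). -/
def elem (p a b : ℕ) (v : V p) : Bil p :=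
  (coordL p a).smulRight ((coordL p b).smulRight v)
    - (coordL p b).smulRight ((coordL p a).smulRight v)

/-- The Lie bracket of the frobeniusian model algebra `F_φ`:
`[X_1,X_2] = −X_1`, `[X_{2k+1},X_{2k+2}] = −X_1`, `[X_2,X_{2k+1}] = −φ_k X_{2k+1}`,
`[X_2,X_{2k+2}] = (1+φ_k) X_{2k+2}` for `1 ≤ k ≤ p−1`. -/
def mu (p : ℕ) (φ : ℕ → ℂ) : Bil p :=
  elem p 1 2 (-(X p 1)) +
    ∑ k ∈ Finset.Icc 1 (p-1),
      (elem p (2*k+1) (2*k+2) (-(X p 1)) + elem p 2 (2*k+1) (-(φ k) • X p (2*k+1))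
        + elem p 2 (2*k+2) ((1 + φ k) • X p (2*k+2)))

/-- `φ` avoids the set `Ω₁`. -/
def AvoidsOmega1 (p : ℕ) (φ : ℕ → ℂ) : Prop :=
  ∀ i j : ℕ, 1 ≤ i → i ≤ p - 1 → 1 ≤ j → j ≤ p - 1 →
    1 + φ i + φ j ≠ 0 ∧ 2 + φ i + φ j ≠ 0 ∧ (i ≠ j → φ i ≠ φ j) ∧
      φ i ≠ 0 ∧ φ i ≠ -1 ∧ 2 * φ i + 1 ≠ 0

/-- `φ` avoids the set `Ω = Ω₁ ∪ Ω₂`. -/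
def AvoidsOmega (p : ℕ) (φ : ℕ → ℂ) : Prop :=
  AvoidsOmega1 p φ ∧
    ∀ i j : ℕ, 1 ≤ i → i ≤ p - 1 → 1 ≤ j → j ≤ p - 1 →
      (i ≠ j → 1 + φ i - φ j ≠ 0) ∧ φ i + φ j ≠ 0 ∧ 2 + φ i ≠ 0 ∧ 1 - φ i ≠ 0 ∧
        1 + 2*φ i - φ j ≠ 0 ∧ 1 + 2*φ i + φ j ≠ 0 ∧ 2*φ i - φ j ≠ 0 ∧ 2 + 2*φ i + φ j ≠ 0

/-- The space of derivations of a bilinear bracket `B` on `ℂ^{2p}`. -/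
def derSub (p : ℕ) (B : Bil p) : Submodule ℂ (V p →ₗ[ℂ] V p) where
  carrier := {D | ∀ x y, D (B x y) = B (D x) y + B x (D y)}
  add_mem' := by
    intro D E hD hE x y
    simp only [LinearMap.add_apply, hD x y, hE x y, map_add, LinearMap.add_apply]
    abel
  zero_mem' := by intro x y; simp
  smul_mem' := by
    intro c D hD x y
    simp only [LinearMap.smul_apply, hD x y, map_smul, LinearMap.map_smul₂,
      LinearMap.smul_apply, smul_add]

/-- The grading subspaces: `g_0 = ℂ X_2`, `g_1 = ⟨X_3,…,X_{2p}⟩`, `g_2 = ℂ X_1`,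
and `g_m = 0` otherwise. -/
def gr (p : ℕ) : ℤ → Submodule ℂ (V p) := fun m =>
  if m = 0 then Submodule.span ℂ {X p 2}
  else if m = 1 then Submodule.span ℂ {v | ∃ j, 3 ≤ j ∧ j ≤ 2*p ∧ v = X p j}
  else if m = 2 then Submodule.span ℂ {X p 1}
  else ⊥

/-- The space of 2-cocycles of `F_φ` with coefficients in the adjoint module
(2-cochains are alternating bilinear maps). -/
def Z2 (p : ℕ) (φ : ℕ → ℂ) : Submodule ℂ (Bil p) where
  carrier := {ψ | (∀ x, ψ x x = 0) ∧
    ∀ x y z, mu p φ x (ψ y z) - mu p φ y (ψ x z) + mu p φ z (ψ x y)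
      - ψ (mu p φ x y) z + ψ (mu p φ x z) y - ψ (mu p φ y z) x = 0}
  add_mem' := by
    rintro ψ₁ ψ₂ ⟨h₁a, h₁c⟩ ⟨h₂a, h₂c⟩
    constructor
    · intro x; simp [h₁a x, h₂a x]
    · intro x y z
      have e₁ := h₁c x y z
      have e₂ := h₂c x y z
      simp only [LinearMap.add_apply, map_add]
      rw [← sub_eq_zero] at *
      simp only [sub_zero] at *
      linear_combination (norm := module) e₁ + e₂
  zero_mem' := by
    constructor
    · intro x; simp
    · intro x y z; simp
  smul_mem' := by
    rintro c ψ ⟨ha, hc⟩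
    constructor
    · intro x; simp [ha x]
    · intro x y z
      have e := hc x y z
      simp only [LinearMap.smul_apply, map_smul]
      linear_combination (norm := module) c • e

/-- The space of 2-coboundaries of `F_φ` with coefficients in the adjoint module. -/
def B2 (p : ℕ) (φ : ℕ → ℂ) : Submodule ℂ (Bil p) where
  carrier := {ψ | ∃ f : V p →ₗ[ℂ] V p,
    ∀ x y, ψ x y = mu p φ x (f y) - mu p φ y (f x) - f (mu p φ x y)}
  add_mem' := by
    rintro ψ₁ ψ₂ ⟨f₁, h₁⟩ ⟨f₂, h₂⟩
    refine ⟨f₁ + f₂, fun x y => ?_⟩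
    simp only [LinearMap.add_apply, h₁ x y, h₂ x y, map_add]
    abel
  zero_mem' := ⟨0, by intro x y; simp⟩
  smul_mem' := by
    rintro c ψ ⟨f, h⟩
    refine ⟨c • f, fun x y => ?_⟩
    simp only [LinearMap.smul_apply, h x y, map_smul, smul_sub]

/-- The 2-cochains of degree `k` with respect to the grading `gr`. -/
def degSub (p : ℕ) (k : ℤ) : Submodule ℂ (Bil p) where
  carrier := {ψ | ∀ (a b : ℤ), ∀ x ∈ gr p a, ∀ y ∈ gr p b, ψ x y ∈ gr p (a + b + k)}
  add_mem' := by
    intro ψ₁ ψ₂ h₁ h₂ a b x hx y hy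
    simpa using Submodule.add_mem _ (h₁ a b x hx y hy) (h₂ a b x hx y hy)
  zero_mem' := by intro a b x hx y hy; simp
  smul_mem' := by
    intro c ψ h a b x hx y hy
    simpa using Submodule.smul_mem _ c (h a b x hx y hy)

attribute [local instance 100] LieRing.ofAssociativeRing

/-- The derivations of `F_φ` as a Lie subalgebra of `End(ℂ^{2p})`. -/
def derLie (p : ℕ) (φ : ℕ → ℂ) : LieSubalgebra ℂ (Module.End ℂ (V p)) :=
  { derSub p (mu p φ) with
    lie_mem' := by
      intro D E hD hE
      have hD' : ∀ x y, D (mu p φ x y) = mu p φ (D x) y + mu p φ x (D y) := hD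
      have hE' : ∀ x y, E (mu p φ x y) = mu p φ (E x) y + mu p φ x (E y) := hE
      intro x y
      simp only [Ring.lie_def, LinearMap.sub_apply, Module.End.mul_apply]
      rw [hE' x y, hD' x y, map_add, map_add, hD' (E x) y, hD' x (E y),
        hE' (D x) y, hE' x (D y)]
      simp only [map_sub, LinearMap.sub_apply]
      abel }

/-- The derivation `f_i` of `F_φ` : `f_i(X_{2i+1}) = X_{2i+1}`, `f_i(X_{2i+2}) = −X_{2i+2}`. -/
def fDer (p i : ℕ) : V p →ₗ[ℂ] V p :=
  (coordL p (2*i+1)).smulRight (X p (2*i+1)) - (coordL p (2*i+2)).smulRight (X p (2*i+2))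

/-- The 2-cocycle `ψ_k = ψ^{2k+1}_{2,2k+1}` :
`(X_2,X_{2k+1}) ↦ X_{2k+1}`, `(X_2,X_{2k+2}) ↦ −X_{2k+2}`. -/
def psiK (p k : ℕ) : Bil p :=
  elem p 2 (2*k+1) (X p (2*k+1)) - elem p 2 (2*k+2) (X p (2*k+2))

/-- The 2-cocycle `ψ^2_{12}` spanning `Z²_{−2}`. -/
def psiM2 (p : ℕ) (φ : ℕ → ℂ) : Bil p :=
  elem p 1 2 (X p 2) +
    ∑ k ∈ Finset.Icc 1 (p-1),
      (elem p (2*k+1) (2*k+2) (X p 2) + elem p 1 (2*k+1) (-(φ k) • X p (2*k+1))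
        + elem p 1 (2*k+2) ((1 + φ k) • X p (2*k+2)))

/-- The 2-cocycle `ψ^1_{2,j}` : `(X_2,X_j) ↦ X_1`. -/
def psiTop (p j : ℕ) : Bil p := elem p 2 j (X p 1)


/-! ### Plain-function versions of the relevant spaces.
We realise spaces of (multi)linear maps as submodules of plain function spaces,
the (bi)linearity being part of the defining conditions. -/

/-- `ψ : ℂ^{2p} × ℂ^{2p} → ℂ^{2p}` is bilinear. -/
def IsBil (p : ℕ) (ψ : V p → V p → V p) : Prop :=
  (∀ x x' y, ψ (x + x') y = ψ x y + ψ x' y) ∧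
  (∀ (c : ℂ) (x y), ψ (c • x) y = c • ψ x y) ∧
  (∀ x y y', ψ x (y + y') = ψ x y + ψ x y') ∧
  (∀ (c : ℂ) (x y), ψ x (c • y) = c • ψ x y)

/-- The space of derivations of a bilinear bracket `B` on `ℂ^{2p}`, realised inside
the space of all maps `ℂ^{2p} → ℂ^{2p}` (linearity is part of the conditions). -/
def derF (p : ℕ) (B : Bil p) : Submodule ℂ (V p → V p) where
  carrier := {D | (∀ x y, D (x + y) = D x + D y) ∧ (∀ (c : ℂ) (x), D (c • x) = c • D x) ∧
    ∀ x y, D (B x y) = B (D x) y + B x (D y)}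
  add_mem' := by
    rintro D E ⟨hDa, hDs, hDd⟩ ⟨hEa, hEs, hEd⟩
    refine ⟨fun x y => ?_, fun c x => ?_, fun x y => ?_⟩
    · simp only [Pi.add_apply, hDa, hEa]; abel
    · simp only [Pi.add_apply, hDs, hEs, smul_add]
    · simp only [Pi.add_apply, hDd x y, hEd x y, map_add, LinearMap.add_apply]; abel
  zero_mem' := by
    refine ⟨fun x y => ?_, fun c x => ?_, fun x y => ?_⟩ <;> simp
  smul_mem' := by
    rintro c D ⟨hDa, hDs, hDd⟩
    refine ⟨fun x y => ?_, fun c' x => ?_, fun x y => ?_⟩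
    · simp only [Pi.smul_apply, hDa, smul_add]
    · simp only [Pi.smul_apply, hDs, smul_comm c c']
    · simp only [Pi.smul_apply, hDd x y, map_smul, LinearMap.smul_apply, smul_add]

/-- The space of inner derivations `ad(v) = B(v,·)` of a bilinear bracket `B`. -/
def innerF (p : ℕ) (B : Bil p) : Submodule ℂ (V p → V p) where
  carrier := {D | ∃ v, D = fun y => B v y}
  add_mem' := by
    rintro D E ⟨v, rfl⟩ ⟨w, rfl⟩
    exact ⟨v + w, by funext y; simp [map_add]⟩
  zero_mem' := ⟨0, by funext y; simp⟩
  smul_mem' := by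
    rintro c D ⟨v, rfl⟩
    exact ⟨c • v, by funext y; simp [map_smul]⟩

/-- The space of 2-cocycles of `F_φ` with coefficients in the adjoint module;
2-cochains are alternating bilinear maps `ℂ^{2p} × ℂ^{2p} → ℂ^{2p}`. -/
def Z2F (p : ℕ) (φ : ℕ → ℂ) : Submodule ℂ (V p → V p → V p) where
  carrier := {ψ | IsBil p ψ ∧ (∀ x, ψ x x = 0) ∧
    ∀ x y z, mu p φ x (ψ y z) - mu p φ y (ψ x z) + mu p φ z (ψ x y)
      - ψ (mu p φ x y) z + ψ (mu p φ x z) y - ψ (mu p φ y z) x = 0}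
  add_mem' := by
    rintro ψ₁ ψ₂ ⟨⟨hb₁, hb₂, hb₃, hb₄⟩, ha, hc⟩ ⟨⟨hb₁', hb₂', hb₃', hb₄'⟩, ha', hc'⟩
    refine ⟨⟨fun x x' y => ?_, fun c x y => ?_, fun x y y' => ?_, fun c x y => ?_⟩,
      fun x => ?_, fun x y z => ?_⟩
    · simp only [Pi.add_apply, hb₁, hb₁']; abel
    · simp only [Pi.add_apply, hb₂, hb₂', smul_add]
    · simp only [Pi.add_apply, hb₃, hb₃']; abel
    · simp only [Pi.add_apply, hb₄, hb₄', smul_add]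
    · simp only [Pi.add_apply, ha x, ha' x]; abel
    · have e := hc x y z
      have e' := hc' x y z
      simp only [Pi.add_apply, map_add]
      linear_combination (norm := module) e + e'
  zero_mem' := by
    refine ⟨⟨fun x x' y => ?_, fun c x y => ?_, fun x y y' => ?_, fun c x y => ?_⟩,
      fun x => ?_, fun x y z => ?_⟩ <;> simp
  smul_mem' := by
    rintro c ψ ⟨⟨hb₁, hb₂, hb₃, hb₄⟩, ha, hc⟩
    refine ⟨⟨fun x x' y => ?_, fun c' x y => ?_, fun x y y' => ?_, fun c' x y => ?_⟩,
      fun x => ?_, fun x y z => ?_⟩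
    · simp only [Pi.smul_apply, hb₁, smul_add]
    · simp only [Pi.smul_apply, hb₂, smul_comm c c']
    · simp only [Pi.smul_apply, hb₃, smul_add]
    · simp only [Pi.smul_apply, hb₄, smul_comm c c']
    · simp only [Pi.smul_apply, ha x, smul_zero]
    · have e := hc x y z
      simp only [Pi.smul_apply, map_smul]
      linear_combination (norm := module) c • e

/-- The space of 2-coboundaries of `F_φ` with coefficients in the adjoint module. -/
def B2F (p : ℕ) (φ : ℕ → ℂ) : Submodule ℂ (V p → V p → V p) where
  carrier := {ψ | ∃ f : V p →ₗ[ℂ] V p,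
    ∀ x y, ψ x y = mu p φ x (f y) - mu p φ y (f x) - f (mu p φ x y)}
  add_mem' := by
    rintro ψ₁ ψ₂ ⟨f₁, h₁⟩ ⟨f₂, h₂⟩
    refine ⟨f₁ + f₂, fun x y => ?_⟩
    simp only [Pi.add_apply, h₁ x y, h₂ x y, map_add, LinearMap.add_apply]
    abel
  zero_mem' := ⟨0, by intro x y; simp⟩
  smul_mem' := by
    rintro c ψ ⟨f, h⟩
    refine ⟨c • f, fun x y => ?_⟩
    simp only [Pi.smul_apply, h x y, map_smul, LinearMap.smul_apply, smul_sub]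

/-- The 2-cochains of degree `k` with respect to the grading `gr`. -/
def degF (p : ℕ) (k : ℤ) : Submodule ℂ (V p → V p → V p) where
  carrier := {ψ | ∀ (a b : ℤ), ∀ x ∈ gr p a, ∀ y ∈ gr p b, ψ x y ∈ gr p (a + b + k)}
  add_mem' := by
    intro ψ₁ ψ₂ h₁ h₂ a b x hx y hy
    simpa using Submodule.add_mem _ (h₁ a b x hx y hy) (h₂ a b x hx y hy)
  zero_mem' := by intro a b x hx y hy; simp
  smul_mem' := by
    intro c ψ h a b x hx y hy
    simpa using Submodule.smul_mem _ c (h a b x hx y hy)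

/-- A bilinear map, viewed as a plain function. -/
def toF (p : ℕ) (B : Bil p) : V p → V p → V p := fun x y => B x y

/-! The `X_2`-part of the bracket never reaches `X_1`, so `ω_1([x, y])` is the standard
symplectic form `∑ₖ (x_{2k+2} y_{2k+1} - x_{2k+1} y_{2k+2})` pairing `X_{2k+1}` with `X_{2k+2}`.
Pairing `x` with the basis vectors therefore recovers every coordinate of `x`, and the
skew-symmetry of the bracket gives the same for the second argument. -/

lemma coordL_apply {p j : ℕ} (h : j - 1 < 2*p) (x : V p) : coordL p j x = x ⟨j-1, h⟩ := by
  rw [coordL, dif_pos h]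
  rfl

lemma coordL_X {p j : ℕ} (m : ℕ) (hj : 1 ≤ j) (hjp : j ≤ 2*p) :
    coordL p j (X p m) = if j = m then 1 else 0 := by
  rw [coordL_apply (by omega)]
  simp only [X, Nat.sub_add_cancel hj]

lemma coordL_elem (p a b j : ℕ) (v x y : V p) :
    coordL p j (elem p a b v x y)
      = (coordL p a x * coordL p b y - coordL p b x * coordL p a y) * coordL p j v := by
  simp only [elem, LinearMap.sub_apply, LinearMap.smulRight_apply, LinearMap.smul_apply,
    map_sub, map_smul, smul_eq_mul]
  ring

lemma elem_skew (p a b : ℕ) (v x y : V p) : elem p a b v y x = - elem p a b v x y := by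
  simp only [elem, LinearMap.sub_apply, LinearMap.smulRight_apply, LinearMap.smul_apply,
    smul_smul]
  module

lemma mu_skew (p : ℕ) (φ : ℕ → ℂ) (x y : V p) : mu p φ y x = - mu p φ x y := by
  simp only [mu, LinearMap.add_apply, LinearMap.sum_apply, elem_skew p _ _ _ x y, ← neg_add,
    Finset.sum_neg_distrib]

lemma coordL_one_mu {p : ℕ} (hp : 1 ≤ p) (φ : ℕ → ℂ) (x y : V p) :
    coordL p 1 (mu p φ x y) = ∑ k ∈ Finset.range p,
      (coordL p (2*k+2) x * coordL p (2*k+1) y - coordL p (2*k+1) x * coordL p (2*k+2) y) := by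
  have hX : ∀ m, coordL p 1 (X p m) = if 1 = m then 1 else 0 :=
    fun m => coordL_X m le_rfl (by omega)
  obtain ⟨q, rfl⟩ : ∃ q, p = q + 1 := ⟨p - 1, by omega⟩
  rw [Finset.sum_range_succ', mu, Nat.add_sub_cancel, ← Finset.Ico_add_one_right_eq_Icc,
    Finset.sum_Ico_eq_sum_range, Nat.add_sub_cancel]
  simp only [LinearMap.add_apply, LinearMap.sum_apply, map_add, map_sum, coordL_elem,
    map_neg, map_smul, smul_eq_mul, hX]
  simp (disch := omega) only [↓reduceIte, if_neg, mul_zero, add_zero]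
  rw [add_comm (Finset.sum _ _)]
  congr 1
  · ring
  · exact Finset.sum_congr rfl fun k _ => by rw [add_comm 1 k]; ring

lemma coordL_one_mu_X_odd {p k : ℕ} (hk : k < p) (φ : ℕ → ℂ) (x : V p) :
    coordL p 1 (mu p φ x (X p (2*k+1))) = coordL p (2*k+2) x := by
  rw [coordL_one_mu (by omega), Finset.sum_eq_single_of_mem k (Finset.mem_range.2 hk)]
  · simp (disch := omega) only [coordL_X, ↓reduceIte, if_neg, mul_one, mul_zero, sub_zero]
  · intro i hi _
    have := Finset.mem_range.1 hi
    simp (disch := omega) only [coordL_X, if_neg, mul_zero, sub_zero]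

lemma coordL_one_mu_X_even {p k : ℕ} (hk : k < p) (φ : ℕ → ℂ) (x : V p) :
    coordL p 1 (mu p φ x (X p (2*k+2))) = - coordL p (2*k+1) x := by
  rw [coordL_one_mu (by omega), Finset.sum_eq_single_of_mem k (Finset.mem_range.2 hk)]
  · simp (disch := omega) only [coordL_X, ↓reduceIte, if_neg, mul_one, mul_zero, zero_sub]
  · intro i hi _
    have := Finset.mem_range.1 hi
    simp (disch := omega) only [coordL_X, if_neg, mul_zero, sub_zero]

lemma eq_zero_of_coordL_eq_zero {p : ℕ} {x : V p}
    (h : ∀ j, 1 ≤ j → j ≤ 2*p → coordL p j x = 0) : x = 0 := by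
  funext i
  simpa [coordL_apply] using h (i + 1) (by omega) (by omega)

lemma eq_zero_of_coordL_one_mu_eq_zero {p : ℕ} (φ : ℕ → ℂ) {x : V p}
    (h : ∀ y, coordL p 1 (mu p φ x y) = 0) : x = 0 := by
  refine eq_zero_of_coordL_eq_zero fun j hj hjp => ?_
  obtain ⟨k, rfl | rfl⟩ : ∃ k, j = 2*k+1 ∨ j = 2*k+2 := ⟨(j - 1) / 2, by omega⟩
  · simpa [coordL_one_mu_X_even (show k < p by omega)] using h (X p (2*k+2))
  · simpa [coordL_one_mu_X_odd (show k < p by omega)] using h (X p (2*k+1))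

theorem stmt0_general (p : ℕ) (φ : ℕ → ℂ) :
    (∀ x : V p, (∀ y : V p, coordL p 1 (mu p φ x y) = 0) → x = 0) ∧
    (∀ y : V p, (∀ x : V p, coordL p 1 (mu p φ x y) = 0) → y = 0) := by
  refine ⟨fun x hx => eq_zero_of_coordL_one_mu_eq_zero φ hx, fun y hy => ?_⟩
  refine eq_zero_of_coordL_one_mu_eq_zero φ fun x => ?_
  rw [mu_skew, map_neg, hy x, neg_zero]

/-- For every `φ ∈ ℂ^{p−1}` the algebra `F_φ` is frobeniusian: the
alternating bilinear form `B(x,y) = ω_1([x,y])`, where `ω_1` is the coordinate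
functional dual to `X_1`, is nondegenerate. -/
theorem stmt0 (p : ℕ) (hp : 2 ≤ p) (φ : ℕ → ℂ) :
    (∀ x : V p, (∀ y : V p, coordL p 1 (mu p φ x y) = 0) → x = 0) ∧
    (∀ y : V p, (∀ x : V p, coordL p 1 (mu p φ x y) = 0) → y = 0) :=
  stmt0_general p φ
end
end

section
/- If φ avoids Ω₁, then the complex vector space of derivations of F_φ has dimension 3p−1. -/
open scoped BigOperators

noncomputable section

attribute [local instance 100] LieRing.ofAssociativeRing

/-!
Write `x = ∑ xₙ X_{n+1}` (0-based coordinates). The bracket of `F_φ` has the shape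
`[x, y] = x₁ • H y - y₁ • H x + ω(x, y) • X₁`, where `H = ad X₂` is diagonal with eigenvalues
`1, 0, -φ_k, 1 + φ_k` and `ω` is the symplectic form pairing `X_{2k+1}` with `X_{2k+2}`. For a
bracket of this shape the Jacobi identity reduces to `ω(Hx, y) + ω(x, Hy) = ω(x, y)`, and a diagonal
map is a derivation as soon as it kills the `X₂`-coordinate and shifts `ω` by the same scalar as
`X₁`; this makes every `ad v` and every `f_k` a derivation.

Conversely, `Ω₁` makes the eigenvalues of `H` pairwise distinct. Let `D` be a derivation. Since
`[D, H] = ad (D X₂)` and `H` is onto the span of the `Xⱼ` with `j ≠ 2`, adding an inner derivation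
makes `D X₂ ∈ ℂ X₂`. Then `[D, H] ∈ ℂ H`, so `D` preserves the eigenlines of `H` and is diagonal; the
brackets `[X₁, X₂] = [X_{2k+1}, X_{2k+2}] = -X₁` force it into `ℂ H ⊕ span (f_k)`. As `ad` is
injective, `Der F_φ = ad F_φ ⊕ span (f_1, …, f_{p-1})`, of dimension `2p + (p - 1)`.
-/

section ExtBracket

variable {R M : Type*} [CommRing R] [AddCommGroup M] [Module R M]

def extBracket (a : M →ₗ[R] R) (H : M →ₗ[R] M) (ω : M →ₗ[R] M →ₗ[R] R) (e : M) (x y : M) : M :=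
  a x • H y - a y • H x + ω x y • e

variable {a : M →ₗ[R] R} {H : M →ₗ[R] M} {ω : M →ₗ[R] M →ₗ[R] R} {e : M}

theorem extBracket_leibniz (haH : ∀ x, a (H x) = 0) (hae : a e = 0) (hHe : H e = e)
    (hωe : ∀ x, ω x e = 0) (hω : ∀ x y, ω x y = -ω y x)
    (hωH : ∀ x y, ω (H x) y + ω x (H y) = ω x y) (v x y : M) :
    extBracket a H ω e v (extBracket a H ω e x y) =
      extBracket a H ω e (extBracket a H ω e v x) y +
        extBracket a H ω e x (extBracket a H ω e v y) := by
  have hHω : ∀ x y, ω (H x) y = ω x y - ω x (H y) := fun x y => by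
    linear_combination hωH x y
  have heω : ∀ x, ω e x = 0 := fun x => by rw [hω, hωe, neg_zero]
  simp only [extBracket, map_add, map_sub, map_smul, LinearMap.add_apply, LinearMap.sub_apply,
    LinearMap.smul_apply, haH, hae, hHe, hωe, heω, hHω, smul_eq_mul]
  linear_combination (norm := module) (a y * (hω x (H v) - hHω v x)) • e

theorem extBracket_derivation {D : M →ₗ[R] M} {c : R} (haD : ∀ x, a (D x) = 0)
    (hDH : ∀ x, D (H x) = H (D x)) (hDe : D e = c • e)
    (hωD : ∀ x y, ω (D x) y + ω x (D y) = c * ω x y) (x y : M) :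
    D (extBracket a H ω e x y) = extBracket a H ω e (D x) y + extBracket a H ω e x (D y) := by
  simp only [extBracket, map_add, map_sub, map_smul, haD, hDH, hDe, zero_smul]
  linear_combination (norm := module) (hωD x y).symm • e

end ExtBracket

namespace FrobeniusModel

variable {p : ℕ}

/-- The coordinate along `X p (n + 1)`; it is `0` for `n ≥ 2 * p`. -/
def coord (n : ℕ) : V p →ₗ[ℂ] ℂ := coordL p (n + 1)

theorem coord_of_lt {n : ℕ} (h : n < 2 * p) (x : V p) : coord n x = x ⟨n, h⟩ := by
  simp [coord, coordL, h]

theorem coord_of_le {n : ℕ} (h : 2 * p ≤ n) (x : V p) : coord n x = 0 := by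
  simp [coord, coordL, show ¬n < 2 * p by omega]

theorem coordL_eq_coord (a : ℕ) (x : V p) : coordL p a x = coord (a - 1) x := by
  cases a <;> rfl

theorem ext_coord {x y : V p} (h : ∀ n < 2 * p, coord n x = coord n y) : x = y := by
  funext i
  simpa [coord_of_lt i.isLt] using h i i.isLt

theorem coord_X (n j : ℕ) : coord n (X p j) = if n + 1 = j ∧ n < 2 * p then 1 else 0 := by
  by_cases h : n < 2 * p
  · simp [coord_of_lt h, X, h]
  · simp [coord_of_le (not_lt.mp h), h]

theorem linearMap_ext_X {f g : V p →ₗ[ℂ] V p}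
    (h : ∀ n < 2 * p, f (X p (n + 1)) = g (X p (n + 1))) : f = g := by
  refine (Pi.basisFun ℂ (Fin (2 * p))).ext fun i => ?_
  convert h i i.isLt using 2 <;>
  · funext j
    simp [X, Pi.single_apply, Fin.ext_iff, eq_comm]

theorem index_cases {n : ℕ} (hn : n < 2 * p) :
    n = 0 ∨ n = 1 ∨ ∃ k, 1 ≤ k ∧ k ≤ p - 1 ∧ (n = 2 * k ∨ n = 2 * k + 1) := by
  rcases Nat.even_or_odd' n with ⟨k, rfl | rfl⟩ <;> rcases Nat.eq_zero_or_pos k with rfl | hk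
  all_goals first | omega | exact Or.inr (Or.inr ⟨k, hk, by omega, by omega⟩)

def diagMap (d : ℕ → ℂ) : V p →ₗ[ℂ] V p where
  toFun x i := d i * x i
  map_add' x y := by funext i; simp [mul_add]
  map_smul' c x := by funext i; simp [mul_left_comm]

theorem coord_diagMap (d : ℕ → ℂ) (n : ℕ) (x : V p) :
    coord n (diagMap d x) = d n * coord n x := by
  by_cases h : n < 2 * p
  · simp [coord_of_lt h, diagMap]
  · simp [coord_of_le (not_lt.mp h)]

theorem diagMap_X (d : ℕ → ℂ) (j : ℕ) : diagMap d (X p j) = d (j - 1) • X p j := by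
  refine ext_coord fun n _ => ?_
  simp only [coord_diagMap, coord_X, map_smul, smul_eq_mul]
  split_ifs with h
  · rw [← h.1, Nat.add_sub_cancel]
  · simp

theorem diagMap_comm (d d' : ℕ → ℂ) (x : V p) :
    diagMap d (diagMap d' x) = diagMap d' (diagMap d x) :=
  ext_coord fun n _ => by simp only [coord_diagMap]; ring

/-- The eigenvalue of `ad X₂` on `X p (n + 1)`. -/
def weight (φ : ℕ → ℂ) (n : ℕ) : ℂ :=
  if n = 0 then 1 else if n = 1 then 0 else if Even n then -φ (n / 2) else 1 + φ (n / 2)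

section weight

variable (φ : ℕ → ℂ)

@[simp] theorem weight_zero : weight φ 0 = 1 := rfl

@[simp] theorem weight_one : weight φ 1 = 0 := rfl

theorem weight_two_mul {k : ℕ} (hk : 1 ≤ k) : weight φ (2 * k) = -φ k := by
  simp [weight, show 2 * k ≠ 0 by omega, show 2 * k ≠ 1 by omega]

theorem weight_two_mul_add_one {k : ℕ} (hk : 1 ≤ k) : weight φ (2 * k + 1) = 1 + φ k := by
  simp [weight, show k ≠ 0 by omega, show (2 * k + 1) / 2 = k by omega]

theorem weight_two_mul_add {k : ℕ} (hk : 1 ≤ k) :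
    weight φ (2 * k) + weight φ (2 * k + 1) = 1 := by
  rw [weight_two_mul φ hk, weight_two_mul_add_one φ hk]
  ring

theorem _root_.AvoidsOmega1.injOn_weight (hΩ : AvoidsOmega1 p φ) :
    Set.InjOn (weight φ) (Set.Iio (2 * p)) := by
  intro n hn m hm h
  have hφ0 : ∀ k, 1 ≤ k → k ≤ p - 1 → φ k ≠ 0 :=
    fun k hk1 hk2 => (hΩ k k hk1 hk2 hk1 hk2).2.2.2.1
  have hφ1 : ∀ k, 1 ≤ k → k ≤ p - 1 → φ k ≠ -1 :=
    fun k hk1 hk2 => (hΩ k k hk1 hk2 hk1 hk2).2.2.2.2.1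
  have hφφ : ∀ k l, 1 ≤ k → k ≤ p - 1 → 1 ≤ l → l ≤ p - 1 → 1 + φ k + φ l ≠ 0 :=
    fun k l hk1 hk2 hl1 hl2 => (hΩ k l hk1 hk2 hl1 hl2).1
  have hinj : ∀ k l, 1 ≤ k → k ≤ p - 1 → 1 ≤ l → l ≤ p - 1 → φ k = φ l → k = l :=
    fun k l hk1 hk2 hl1 hl2 => not_imp_not.mp (hΩ k l hk1 hk2 hl1 hl2).2.2.1
  rcases index_cases hn with rfl | rfl | ⟨k, hk1, hk2, rfl | rfl⟩ <;>
  rcases index_cases hm with rfl | rfl | ⟨l, hl1, hl2, rfl | rfl⟩ <;>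
  simp (disch := omega) only [weight_zero, weight_one, weight_two_mul φ,
    weight_two_mul_add_one φ] at h <;>
  grind

theorem weight_ne_zero_of_injOn (hp : 0 < p) (hinj : Set.InjOn (weight φ) (Set.Iio (2 * p)))
    {n : ℕ} (hn : n < 2 * p) (h1 : n ≠ 1) : weight φ n ≠ 0 := fun h0 =>
  h1 (hinj hn (show 1 < 2 * p by omega) (h0.trans (weight_one φ).symm))

end weight

def symp : V p →ₗ[ℂ] V p →ₗ[ℂ] ℂ :=
  LinearMap.mk₂ ℂ
    (fun x y => ∑ k ∈ Finset.Icc 1 (p - 1),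
      (coord (2 * k + 1) x * coord (2 * k) y - coord (2 * k) x * coord (2 * k + 1) y))
    (fun x x' y => by
      simp only [map_add, ← Finset.sum_add_distrib]
      exact Finset.sum_congr rfl fun _ _ => by ring)
    (fun c x y => by
      simp only [map_smul, smul_eq_mul, Finset.mul_sum]
      exact Finset.sum_congr rfl fun _ _ => by ring)
    (fun x y y' => by
      simp only [map_add, ← Finset.sum_add_distrib]
      exact Finset.sum_congr rfl fun _ _ => by ring)
    (fun c x y => by
      simp only [map_smul, smul_eq_mul, Finset.mul_sum]
      exact Finset.sum_congr rfl fun _ _ => by ring)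

theorem symp_apply (x y : V p) : symp x y = ∑ k ∈ Finset.Icc 1 (p - 1),
      (coord (2 * k + 1) x * coord (2 * k) y - coord (2 * k) x * coord (2 * k + 1) y) :=
  rfl

theorem symp_comm (x y : V p) : symp x y = -symp y x := by
  simp only [symp_apply, ← Finset.sum_neg_distrib]
  exact Finset.sum_congr rfl fun _ _ => by ring

theorem symp_diagMap {d : ℕ → ℂ} {c : ℂ}
    (hd : ∀ k ∈ Finset.Icc 1 (p - 1), d (2 * k) + d (2 * k + 1) = c) (x y : V p) :
    symp (diagMap d x) y + symp x (diagMap d y) = c * symp x y := by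
  simp only [symp_apply, coord_diagMap, Finset.mul_sum, ← Finset.sum_add_distrib]
  refine Finset.sum_congr rfl fun k hk => ?_
  rw [← hd k hk]
  ring

theorem symp_eq_zero_of_coord {y : V p} (hy : ∀ n, 2 ≤ n → coord n y = 0) (x : V p) :
    symp x y = 0 := by
  refine (symp_apply x y).trans (Finset.sum_eq_zero fun k hk => ?_)
  rw [Finset.mem_Icc] at hk
  rw [hy (2 * k) (by omega), hy (2 * k + 1) (by omega), mul_zero, mul_zero, sub_zero]

theorem symp_X_one (x : V p) : symp x (X p 1) = 0 :=
  symp_eq_zero_of_coord (fun n hn => by simp [coord_X]; omega) x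

theorem symp_X_two (x : V p) : symp x (X p 2) = 0 :=
  symp_eq_zero_of_coord (fun n hn => by simp [coord_X]; omega) x

theorem symp_X_pair {k : ℕ} (hk1 : 1 ≤ k) (hk2 : k ≤ p - 1) :
    symp (X p (2 * k + 1)) (X p (2 * k + 2)) = -1 := by
  rw [symp_apply, Finset.sum_eq_single_of_mem k (Finset.mem_Icc.mpr ⟨hk1, hk2⟩) fun j hj hjk => by
    simp (disch := (simp only [Finset.mem_Icc] at *; omega)) only [coord_X, if_neg]
    ring]
  simp (disch := omega) only [coord_X, true_and, if_pos, if_neg]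
  ring

variable (φ : ℕ → ℂ)

theorem mu_apply (x y : V p) :
    mu p φ x y = extBracket (coord 1) (diagMap (weight φ)) symp (X p 1) x y := by
  refine ext_coord fun n hn => ?_
  have e1 : ∀ k : ℕ, 2 * k + 1 - 1 = 2 * k := fun k => by omega
  have e2 : ∀ k : ℕ, 2 * k + 2 - 1 = 2 * k + 1 := fun k => by omega
  simp only [extBracket, mu, elem, LinearMap.add_apply, LinearMap.sum_apply, LinearMap.sub_apply,
    LinearMap.smulRight_apply, map_add, map_sub, map_sum, map_smul, map_neg, coordL_eq_coord,
    coord_diagMap, coord_X, smul_eq_mul, symp_apply, e1, e2, LinearMap.smul_apply, Nat.reduceSub,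
    and_iff_left hn, Nat.add_right_cancel_iff, Nat.add_eq_right]
  rcases index_cases hn with rfl | rfl | ⟨k, hk1, hk2, rfl | rfl⟩
  · simp (disch := (simp only [Finset.mem_Icc] at *; omega)) only [if_neg, if_true, weight_zero]
    simp only [mul_neg, mul_one, mul_zero, sub_zero, add_zero, one_mul, Finset.sum_sub_distrib,
      Finset.sum_neg_distrib]
    ring
  · simp (disch := (simp only [Finset.mem_Icc] at *; omega)) only [if_neg, weight_one]
    simp
  · rw [Finset.sum_eq_single_of_mem k (Finset.mem_Icc.mpr ⟨hk1, hk2⟩) fun j hj hjk => by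
      simp (disch := (simp only [Finset.mem_Icc] at *; omega)) only [if_neg]
      ring]
    simp (disch := omega) only [if_neg, if_true, weight_two_mul φ hk1]
    ring
  · rw [Finset.sum_eq_single_of_mem k (Finset.mem_Icc.mpr ⟨hk1, hk2⟩) fun j hj hjk => by
      simp (disch := (simp only [Finset.mem_Icc] at *; omega)) only [if_neg]
      ring]
    simp (disch := omega) only [if_neg, if_true, weight_two_mul_add_one φ hk1]
    ring

theorem mu_comm (x y : V p) : mu p φ x y = -mu p φ y x := by
  simp only [mu_apply, extBracket, symp_comm x y]
  module

theorem mu_X_two : mu p φ (X p 2) = diagMap (weight φ) := by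
  refine LinearMap.ext fun y => ?_
  have hH : diagMap (weight φ) (X p 2) = 0 := by simp [diagMap_X]
  -- the leftover goal is the case `p = 0`, where `V p` is trivial
  simpa [mu_apply, extBracket, hH, symp_comm (X p 2), symp_X_two, coord_X] using
    fun _ => ext_coord fun n hn => by omega

theorem mu_X_one_right (v : V p) : mu p φ v (X p 1) = coord 1 v • X p 1 := by
  simp [mu_apply, extBracket, symp_X_one, coord_X, diagMap_X]

theorem mu_X_one_X_two (hp : 0 < p) : mu p φ (X p 1) (X p 2) = -X p 1 := by
  simp [mu_apply, extBracket, symp_X_two, coord_X, diagMap_X, show 1 < 2 * p by omega]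

theorem mu_X_pair {k : ℕ} (hk1 : 1 ≤ k) (hk2 : k ≤ p - 1) :
    mu p φ (X p (2 * k + 1)) (X p (2 * k + 2)) = -X p 1 := by
  simp [mu_apply, extBracket, coord_X, symp_X_pair hk1 hk2, show k ≠ 0 by omega]

theorem mu_leibniz (v x y : V p) :
    mu p φ v (mu p φ x y) = mu p φ (mu p φ v x) y + mu p φ x (mu p φ v y) := by
  simp only [mu_apply]
  refine extBracket_leibniz (fun x => ?_) ?_ ?_ symp_X_one symp_comm (fun x y => ?_) v x y
  · rw [coord_diagMap, weight_one, zero_mul]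
  · simp [coord_X]
  · simp [diagMap_X]
  · rw [symp_diagMap fun k hk => weight_two_mul_add φ (Finset.mem_Icc.mp hk).1, one_mul]

theorem mu_mem_derSub (v : V p) : mu p φ v ∈ derSub p (mu p φ) :=
  mu_leibniz φ v

theorem diagMap_mem_derSub {d : ℕ → ℂ} (hd1 : d 1 = 0)
    (hd : ∀ k ∈ Finset.Icc 1 (p - 1), d (2 * k) + d (2 * k + 1) = d 0) :
    diagMap d ∈ derSub p (mu p φ) := fun x y => by
  simp only [mu_apply]
  refine extBracket_derivation (fun x => ?_) (diagMap_comm _ _) ?_ (symp_diagMap hd) x y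
  · rw [coord_diagMap, hd1, zero_mul]
  · simp [diagMap_X]

def fDerDiag (k n : ℕ) : ℂ := if n = 2 * k then 1 else if n = 2 * k + 1 then -1 else 0

theorem fDerDiag_two_mul_add (k j : ℕ) : fDerDiag k (2 * j) + fDerDiag k (2 * j + 1) = 0 := by
  unfold fDerDiag
  split_ifs <;> first | ring1 | (exfalso; omega)

theorem fDer_eq_diagMap (k : ℕ) : fDer p k = diagMap (fDerDiag k) := by
  refine LinearMap.ext fun x => ext_coord fun n hn => ?_
  have e1 : 2 * k + 1 - 1 = 2 * k := by omega
  have e2 : 2 * k + 2 - 1 = 2 * k + 1 := by omega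
  simp only [fDer, fDerDiag, LinearMap.sub_apply, LinearMap.smulRight_apply, map_sub, map_smul,
    coordL_eq_coord, coord_X, coord_diagMap, smul_eq_mul, e1, e2, and_iff_left hn,
    Nat.add_right_cancel_iff]
  split_ifs <;> first | (subst_vars; ring1) | (exfalso; omega)

def fDerSum (p : ℕ) : (Fin (p - 1) → ℂ) →ₗ[ℂ] V p →ₗ[ℂ] V p :=
  ∑ i, (LinearMap.proj i).smulRight (fDer p (i + 1))

theorem fDerSum_eq_diagMap (t : Fin (p - 1) → ℂ) :
    fDerSum p t = diagMap fun n => ∑ i, t i * fDerDiag (i + 1) n := by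
  refine LinearMap.ext fun x => ext_coord fun n _ => ?_
  simp only [fDerSum, LinearMap.sum_apply, LinearMap.smulRight_apply, LinearMap.proj_apply,
    LinearMap.smul_apply, fDer_eq_diagMap, map_sum, map_smul, coord_diagMap, smul_eq_mul,
    Finset.sum_mul, mul_assoc]

theorem sum_mul_fDerDiag_of_lt_two (t : Fin (p - 1) → ℂ) {n : ℕ} (hn : n < 2) :
    ∑ i, t i * fDerDiag (i + 1) n = 0 :=
  Finset.sum_eq_zero fun i _ => by rw [fDerDiag, if_neg (by omega), if_neg (by omega), mul_zero]

theorem sum_mul_fDerDiag_two_mul (t : Fin (p - 1) → ℂ) (i : Fin (p - 1)) :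
    ∑ j, t j * fDerDiag (j + 1) (2 * (i + 1)) = t i := by
  rw [Fintype.sum_eq_single i fun j hj => ?_]
  · simp [fDerDiag]
  · have hji : (j : ℕ) ≠ i := Fin.val_ne_of_ne hj
    rw [fDerDiag, if_neg (by omega), if_neg (by omega), mul_zero]

theorem sum_mul_fDerDiag_two_mul_add_one (t : Fin (p - 1) → ℂ) (i : Fin (p - 1)) :
    ∑ j, t j * fDerDiag (j + 1) (2 * (i + 1) + 1) = -t i := by
  rw [Fintype.sum_eq_single i fun j hj => ?_]
  · simp [fDerDiag]
  · have hji : (j : ℕ) ≠ i := Fin.val_ne_of_ne hj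
    rw [fDerDiag, if_neg (by omega), if_neg (by omega), mul_zero]

theorem fDerSum_mem_derSub (t : Fin (p - 1) → ℂ) : fDerSum p t ∈ derSub p (mu p φ) := by
  rw [fDerSum_eq_diagMap]
  refine diagMap_mem_derSub φ (sum_mul_fDerDiag_of_lt_two t one_lt_two) fun k _ => ?_
  rw [← Finset.sum_add_distrib, sum_mul_fDerDiag_of_lt_two t two_pos]
  exact Finset.sum_eq_zero fun i _ => by rw [← mul_add, fDerDiag_two_mul_add, mul_zero]

theorem fDerSum_X_eq_zero (t : Fin (p - 1) → ℂ) {j : ℕ} (hj : j ≤ 2) :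
    fDerSum p t (X p j) = 0 := by
  rw [fDerSum_eq_diagMap, diagMap_X, sum_mul_fDerDiag_of_lt_two t (by omega), zero_smul]

theorem diagMap_eq_fDerSum {e : ℕ → ℂ} (h0 : e 0 = 0) (h1 : e 1 = 0)
    (he : ∀ k ∈ Finset.Icc 1 (p - 1), e (2 * k) + e (2 * k + 1) = 0) :
    diagMap e = fDerSum p fun i => e (2 * (i + 1)) := by
  rw [fDerSum_eq_diagMap]
  refine LinearMap.ext fun x => ext_coord fun n hn => ?_
  simp only [coord_diagMap]
  congr 1
  rcases index_cases hn with rfl | rfl | ⟨k, hk1, hk2, rfl | rfl⟩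
  · rw [h0, sum_mul_fDerDiag_of_lt_two _ two_pos]
  · rw [h1, sum_mul_fDerDiag_of_lt_two _ one_lt_two]
  · obtain ⟨i, rfl⟩ : ∃ i : Fin (p - 1), (i : ℕ) + 1 = k := ⟨⟨k - 1, by omega⟩, by simp; omega⟩
    rw [sum_mul_fDerDiag_two_mul]
  · obtain ⟨i, rfl⟩ : ∃ i : Fin (p - 1), (i : ℕ) + 1 = k := ⟨⟨k - 1, by omega⟩, by simp; omega⟩
    rw [sum_mul_fDerDiag_two_mul_add_one]
    linear_combination he _ (Finset.mem_Icc.mpr ⟨hk1, hk2⟩)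

theorem eq_zero_of_mu_add_fDerSum_eq_zero (hweight : ∀ n < 2 * p, n ≠ 1 → weight φ n ≠ 0)
    {v : V p} {t : Fin (p - 1) → ℂ} (h : mu p φ v + fDerSum p t = 0) : v = 0 ∧ t = 0 := by
  have hX : ∀ j, mu p φ v (X p j) + fDerSum p t (X p j) = 0 := fun j => by
    simpa using LinearMap.congr_fun h (X p j)
  have hHv : diagMap (weight φ) v = 0 := by
    simpa [mu_comm φ v, mu_X_two, fDerSum_X_eq_zero] using hX 2
  have hv : v = 0 := ext_coord fun n hn => by
    rcases eq_or_ne n 1 with rfl | h1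
    · simpa [mu_X_one_right, fDerSum_X_eq_zero, coord_X, show 0 < p by omega] using
        congrArg (coord 0) (hX 1)
    · simpa [coord_diagMap, hweight n hn h1] using congrArg (coord n) hHv
  refine ⟨hv, funext fun i => ?_⟩
  have := congrArg (coord (2 * (i + 1))) (hX (2 * (i + 1) + 1))
  simp [hv, fDerSum_eq_diagMap, coord_diagMap, sum_mul_fDerDiag_two_mul, coord_X] at this
  exact this (by omega)

theorem exists_diagMap_weight_eq (hweight : ∀ n < 2 * p, n ≠ 1 → weight φ n ≠ 0) (w : V p) :
    ∃ u, diagMap (weight φ) u = w - coord 1 w • X p 2 := by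
  refine ⟨diagMap (fun n => (weight φ n)⁻¹) w, ext_coord fun n hn => ?_⟩
  rcases eq_or_ne n 1 with rfl | h1
  · simp [coord_diagMap, coord_X, hn]
  · simp [coord_diagMap, coord_X, hweight n hn h1, h1]

theorem eq_diagMap_of_mem_derSub (hinj : Set.InjOn (weight φ) (Set.Iio (2 * p)))
    {D : V p →ₗ[ℂ] V p} (hD : D ∈ derSub p (mu p φ)) {c : ℂ} (hc : D (X p 2) = c • X p 2) :
    D = diagMap fun n => coord n (D (X p (n + 1))) := by
  refine linearMap_ext_X fun m hm => ext_coord fun n hn => ?_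
  rw [diagMap_X, map_smul, coord_X, Nat.add_sub_cancel, smul_eq_mul]
  split_ifs with h
  · obtain rfl : n = m := by omega
    rw [mul_one]
  -- the derivation rule on `(X₂, X_{m+1})` reads `(weight m - weight n) * D_{nm} = 0`
  have key := congrArg (coord n) (hD (X p 2) (X p (m + 1)))
  simp only [hc, map_smul, LinearMap.smul_apply, mu_X_two, diagMap_X, Nat.add_sub_cancel,
    map_add, coord_diagMap, coord_X, smul_eq_mul, if_neg h, mul_zero, zero_add] at key
  have hne : weight φ m - weight φ n ≠ 0 :=
    sub_ne_zero.mpr fun h' => h ⟨by rw [hinj hm hn h'], hn⟩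
  have hprod : (weight φ m - weight φ n) * coord n (D (X p (m + 1))) = 0 := by
    linear_combination key
  rw [mul_zero]
  exact (mul_eq_zero.mp hprod).resolve_left hne

theorem add_eq_of_diagMap_mem_derSub (hp : 0 < p) {d : ℕ → ℂ}
    (hd : diagMap d ∈ derSub p (mu p φ)) {i j : ℕ} (hij : mu p φ (X p i) (X p j) = -X p 1) :
    d (i - 1) + d (j - 1) = d 0 := by
  have hX1 : coord 0 (X p 1) = 1 := by simp [coord_X, hp]
  have key := congrArg (coord 0) (hd (X p i) (X p j))
  simp only [hij, diagMap_X, map_neg, map_smul, map_add, LinearMap.smul_apply, hX1, smul_eq_mul,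
    Nat.sub_self] at key
  linear_combination key

theorem exists_mu_add_fDerSum_eq (hp : 0 < p) (hinj : Set.InjOn (weight φ) (Set.Iio (2 * p)))
    {D : V p →ₗ[ℂ] V p} (hD : D ∈ derSub p (mu p φ)) :
    ∃ v t, mu p φ v + fDerSum p t = D := by
  obtain ⟨u, hu⟩ := exists_diagMap_weight_eq φ (fun n hn h1 =>
    weight_ne_zero_of_injOn φ hp hinj hn h1) (D (X p 2))
  set d := fun n => coord n ((D + mu p φ u) (X p (n + 1)))
  have hdiag : D + mu p φ u = diagMap d := by
    refine eq_diagMap_of_mem_derSub φ hinj (add_mem hD (mu_mem_derSub φ u))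
      (c := coord 1 (D (X p 2))) ?_
    rw [LinearMap.add_apply, mu_comm, mu_X_two, hu]
    abel
  have hd : diagMap d ∈ derSub p (mu p φ) := hdiag ▸ add_mem hD (mu_mem_derSub φ u)
  have hd1 : d 1 = 0 := by
    simpa using add_eq_of_diagMap_mem_derSub φ hp hd (mu_X_one_X_two φ hp)
  have hd2 : ∀ k ∈ Finset.Icc 1 (p - 1), d (2 * k) + d (2 * k + 1) = d 0 := fun k hk => by
    obtain ⟨hk1, hk2⟩ := Finset.mem_Icc.mp hk
    simpa using add_eq_of_diagMap_mem_derSub φ hp hd (mu_X_pair φ hk1 hk2)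
  set e := fun n => d n - d 0 * weight φ n
  have he : (diagMap d : V p →ₗ[ℂ] V p) = d 0 • diagMap (weight φ) + diagMap e :=
    LinearMap.ext fun x => ext_coord fun n _ => by simp [e, coord_diagMap]; ring
  refine ⟨d 0 • X p 2 - u, fun i => e (2 * (i + 1)), ?_⟩
  rw [← diagMap_eq_fDerSum (by simp [e]) (by simp [e, hd1]) fun k hk => ?_]
  · rw [map_sub, map_smul, mu_X_two]
    linear_combination (norm := module) -he - hdiag
  · simp only [e]
    linear_combination hd2 k hk - d 0 * weight_two_mul_add φ (Finset.mem_Icc.mp hk).1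

end FrobeniusModel

open FrobeniusModel

/-- if `φ` avoids `Ω₁` then `dim Der(F_φ) = 3p − 1`. -/
theorem stmt3 (p : ℕ) (hp : 2 ≤ p) (φ : ℕ → ℂ) (hΩ : AvoidsOmega1 p φ) :
    Module.finrank ℂ ↥(derSub p (mu p φ)) = 3*p - 1 := by
  have hp0 : 0 < p := by omega
  set L := (mu p φ).coprod (fDerSum p)
  have hrange : LinearMap.range L = derSub p (mu p φ) := by
    refine le_antisymm ?_ fun D hD => ?_
    · rintro _ ⟨⟨v, t⟩, rfl⟩
      exact add_mem (mu_mem_derSub φ v) (fDerSum_mem_derSub φ t)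
    · obtain ⟨v, t, h⟩ := exists_mu_add_fDerSum_eq φ hp0 hΩ.injOn_weight hD
      exact ⟨(v, t), h⟩
  have hinj : Function.Injective L := by
    refine LinearMap.ker_eq_bot.mp (LinearMap.ker_eq_bot'.mpr fun ⟨v, t⟩ h => ?_)
    obtain ⟨rfl, rfl⟩ := eq_zero_of_mu_add_fDerSum_eq_zero φ
      (fun n hn h1 => weight_ne_zero_of_injOn φ hp0 hΩ.injOn_weight hn h1) h
    rfl
  rw [← hrange, LinearMap.finrank_range_of_inj hinj, Module.finrank_prod, Module.finrank_fin_fun,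
    Module.finrank_fin_fun]
  omega
end
end
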